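/- arXiv:2510.13224 — 7 statements merged into one kernel-verified Lean document; each statement's English description precedes it below -/
import Mathlib

section
/- Every singularity of a topological expansive flow on a metric space is an isolated point of the space. -/
open Set Metric

def IsFlow {X : Type*} [TopologicalSpace X] (φ : ℝ → X → X) : Prop :=
  (∀ x, φ 0 x = x) ∧ (∀ s t x, φ (s + t) x = φ s (φ t x)) ∧
    Continuous (fun p : ℝ × X => φ p.1 p.2)

def TopExpansive {X : Type*} [MetricSpace X] (φ : ℝ → X → X) : Prop :=
  ∀ ε : ℝ, 0 < ε → ∃ δ : X → ℝ, Continuous δ ∧ (∀ x, 0 < δ x) ∧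
    ∀ x y : X, ∀ α : ℝ → ℝ, Continuous α → α 0 = 0 →
      (∀ t : ℝ, dist (φ t x) (φ (α t) y) < δ (φ t x)) →
      ∃ s ∈ Set.Icc (-ε) ε, φ s x = y

def ExpansiveFlow {X : Type*} [MetricSpace X] (φ : ℝ → X → X) : Prop :=
  ∀ ε : ℝ, 0 < ε → ∃ δ : ℝ, 0 < δ ∧
    ∀ x y : X, ∀ α : ℝ → ℝ, Continuous α → α 0 = 0 →
      (∀ t : ℝ, dist (φ t x) (φ (α t) y) < δ) →
      ∃ s ∈ Set.Icc (-ε) ε, φ s x = y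

theorem stmt0 {X : Type*} [MetricSpace X] (φ : ℝ → X → X)
    (hflow : IsFlow φ) (hexp : TopExpansive φ)
    (x : X) (hx : ∀ t : ℝ, φ t x = x) :
    ∃ ρ : ℝ, 0 < ρ ∧ Metric.ball x ρ = {x} := by
  obtain ⟨δ, hδc, hδp, hδ⟩ := hexp 1 one_pos
  refine ⟨δ x, hδp x, ?_⟩
  ext y
  simp only [Metric.mem_ball, Set.mem_singleton_iff]
  constructor
  · intro hy
    obtain ⟨s, -, hs⟩ := hδ x y (fun _ => 0) continuous_const rfl (fun t => by
      rw [hx t, hflow.1 y, dist_comm]; exact hy)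
    rw [hx s] at hs
    exact hs.symm
  · intro h
    rw [h]
    simpa using hδp x
end

section
/- Topological expansivity of flows is invariant under topological conjugacy: if flows φ on X and ψ on Y are topologically conjugate via a homeomorphism h : Y → X with φ_t ∘ h = h ∘ ψ_t for all t, and φ is topological expansive, then ψ is topological expansive. -/
open Set Metric

theorem stmt3 {X Y : Type*} [MetricSpace X] [MetricSpace Y]
    (φ : ℝ → X → X) (ψ : ℝ → Y → Y)
    (hφ : IsFlow φ) (hψ : IsFlow ψ)
    (h : Y ≃ₜ X) (hconj : ∀ (t : ℝ) (y : Y), φ t (h y) = h (ψ t y))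
    (hexp : TopExpansive φ) :
    TopExpansive ψ := by
  intro ε hε
  obtain ⟨δ, hδc, hδpos, hδ⟩ := hexp ε hε
  set U : Set (Y × Y) := {p | dist (h p.1) (h p.2) < δ (h p.1)} with hU
  have hUopen : IsOpen U := by
    apply isOpen_lt
    · exact continuous_dist.comp
        ((h.continuous.comp continuous_fst).prodMk (h.continuous.comp continuous_snd))
    · exact hδc.comp (h.continuous.comp continuous_fst)
  have hdiag : ∀ y : Y, (y, y) ∈ U := fun y => by simp [hU, hδpos]
  have main : ∀ δ' : Y → ℝ,
      (∀ y y' : Y, dist y y' < δ' y → (y, y') ∈ U) →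
      ∀ y1 y2 : Y, ∀ α : ℝ → ℝ, Continuous α → α 0 = 0 →
      (∀ t : ℝ, dist (ψ t y1) (ψ (α t) y2) < δ' (ψ t y1)) →
      ∃ s ∈ Set.Icc (-ε) ε, ψ s y1 = y2 := by
    intro δ' hδ' y1 y2 α hαc hα0 hd
    have key : ∀ t, dist (φ t (h y1)) (φ (α t) (h y2)) < δ (φ t (h y1)) := by
      intro t
      have hmem := hδ' _ _ (hd t)
      rw [hconj t y1, hconj (α t) y2]
      exact hmem
    obtain ⟨s, hs, hseq⟩ := hδ (h y1) (h y2) α hαc hα0 key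
    exact ⟨s, hs, h.injective (by rw [← hconj]; exact hseq)⟩
  by_cases hne : Uᶜ.Nonempty
  · refine ⟨fun y => min 1 (Metric.infDist (y, y) Uᶜ), ?_, ?_, ?_⟩
    · exact continuous_const.min
        ((Metric.continuous_infDist_pt _).comp (continuous_id.prodMk continuous_id))
    · intro y
      refine lt_min one_pos ?_
      exact (hUopen.isClosed_compl.notMem_iff_infDist_pos hne).mp (by simpa using hdiag y)
    · refine main (fun y => min 1 (Metric.infDist (y, y) Uᶜ)) ?_
      intro y y' hlt
      by_contra hc
      have h1 : Metric.infDist (y, y) Uᶜ ≤ dist (y, y) (y, y') :=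
        Metric.infDist_le_dist_of_mem hc
      have h2 : dist ((y : Y), y) (y, y') = dist y y' := by
        simp [Prod.dist_eq, dist_nonneg]
      rw [h2] at h1
      exact absurd (lt_of_lt_of_le (lt_of_lt_of_le hlt (min_le_right _ _)) h1) (lt_irrefl _)
  · refine ⟨fun _ => 1, continuous_const, fun _ => one_pos, ?_⟩
    refine main (fun _ => (1:ℝ)) ?_
    intro y y' _
    by_contra hc
    exact hne ⟨_, hc⟩
end

section
/- Let φ be a flow on a metric space X all of whose singularities are isolated points of X. Then there exists a continuous function r : X → (0,∞) such that for every x ∈ X, the set ⋂_{t∈ℝ} φ_t(B(x, r(x))) is contained in {x}. -/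
open Set Metric

/-! The radii `r > 0` with `⋂ t, φ t '' B(x, r) ⊆ {x}` form a down-closed subset of `(0, ∞)`,
hence a convex one, so by a partition of unity it suffices to find such a radius that works uniformly
near each point. At an isolated singularity `x` any `r` with `B(x, r) = {x}` does. At a regular
point `x`, with `φ T x ≠ x`, a radius small compared with `dist (φ T x) x` and with the modulus
of continuity of `φ T` makes `B(y, r)` and `φ T '' B(y, r)` disjoint for all `y` near `x`. -/

open Filter Topology

section

variable {X : Type*} [MetricSpace X] (φ : ℝ → X → X)

def IsIsolatingRadius (x : X) (r : ℝ) : Prop :=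
  (⋂ t : ℝ, φ t '' ball x r) ⊆ {x}

variable {φ}

theorem IsIsolatingRadius.mono {x : X} {r s : ℝ} (h : IsIsolatingRadius φ x s) (hrs : r ≤ s) :
    IsIsolatingRadius φ x r :=
  (iInter_mono fun _ => image_mono (ball_subset_ball hrs)).trans h

theorem convex_setOf_isIsolatingRadius (x : X) :
    Convex ℝ {r : ℝ | 0 < r ∧ IsIsolatingRadius φ x r} :=
  OrdConnected.convex ⟨fun _ ha _ hb _ hc => ⟨ha.1.trans_le hc.1, hb.2.mono hc.2⟩⟩

theorem iInter_image_ball_subset_ball (h0 : ∀ x, φ 0 x = x) (x : X) (r : ℝ) :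
    (⋂ t : ℝ, φ t '' ball x r) ⊆ ball x r := by
  refine (iInter_subset _ 0).trans ?_
  rintro _ ⟨w, hw, rfl⟩
  rwa [h0]

theorem isIsolatingRadius_of_ball_eq_singleton (h0 : ∀ x, φ 0 x = x) {x : X} {r : ℝ}
    (hball : ball x r = {x}) : IsIsolatingRadius φ x r :=
  (iInter_image_ball_subset_ball h0 x r).trans hball.subset

theorem exists_pos_forall_ball_isIsolatingRadius_of_ne (h0 : ∀ x, φ 0 x = x) {T : ℝ} {x₀ : X}
    (hT : ContinuousAt (φ T) x₀) (hx₀ : φ T x₀ ≠ x₀) :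
    ∃ s > 0, ∀ y ∈ ball x₀ s, IsIsolatingRadius φ y s := by
  set d := dist (φ T x₀) x₀
  have hd : 0 < d := dist_pos.2 hx₀
  obtain ⟨δ, hδ, hφT⟩ := Metric.continuousAt_iff.1 hT (d / 3) (by positivity)
  set s := min (δ / 2) (d / 3)
  have hsδ : s ≤ δ / 2 := min_le_left _ _
  have hsd : s ≤ d / 3 := min_le_right _ _
  refine ⟨s, by positivity, fun y (hy : dist y x₀ < s) z hz => absurd hz ?_⟩
  -- `B(y, s) ⊆ B(x₀, 2d/3)` and `φ T '' B(y, s) ⊆ B(φ T x₀, d/3)` are disjoint.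
  obtain ⟨w, hw : dist w y < s, rfl⟩ := mem_iInter.1 hz T
  have hzy : dist (φ T w) y < s := iInter_image_ball_subset_ball h0 y s hz
  have hφw : dist (φ T w) (φ T x₀) < d / 3 := hφT (by linarith [dist_triangle w y x₀])
  linarith [dist_triangle_left (φ T x₀) x₀ (φ T w), dist_triangle (φ T w) y x₀]

theorem exists_eventually_isIsolatingRadius (hflow : IsFlow φ)
    (hiso : ∀ x : X, (∀ t : ℝ, φ t x = x) → ∃ ρ : ℝ, 0 < ρ ∧ ball x ρ = {x}) (x₀ : X) :
    ∃ r : ℝ, ∀ᶠ y in 𝓝 x₀, 0 < r ∧ IsIsolatingRadius φ y r := by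
  obtain ⟨h0, -, hcont⟩ := hflow
  by_cases hsing : ∀ t, φ t x₀ = x₀
  · obtain ⟨ρ, hρ, hball⟩ := hiso x₀ hsing
    refine ⟨ρ, eventually_of_mem (ball_mem_nhds x₀ hρ) fun y hy => ?_⟩
    rw [hball, mem_singleton_iff] at hy
    exact hy ▸ ⟨hρ, isIsolatingRadius_of_ball_eq_singleton h0 hball⟩
  · obtain ⟨T, hT⟩ := not_forall.1 hsing
    obtain ⟨s, hs, hball⟩ := exists_pos_forall_ball_isIsolatingRadius_of_ne h0
      (hcont.comp (Continuous.prodMk_right T)).continuousAt hT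
    exact ⟨s, eventually_of_mem (ball_mem_nhds x₀ hs) fun y hy => ⟨hs, hball y hy⟩⟩

end

theorem stmt13 {X : Type*} [MetricSpace X] (φ : ℝ → X → X)
    (hflow : IsFlow φ)
    (hiso : ∀ x : X, (∀ t : ℝ, φ t x = x) → ∃ ρ : ℝ, 0 < ρ ∧ Metric.ball x ρ = {x}) :
    ∃ r : X → ℝ, Continuous r ∧ (∀ x, 0 < r x) ∧
      ∀ x : X, (⋂ t : ℝ, φ t '' Metric.ball x (r x)) ⊆ {x} := by
  obtain ⟨r, hr⟩ := exists_continuous_forall_mem_convex_of_local_const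
    convex_setOf_isIsolatingRadius (exists_eventually_isIsolatingRadius hflow hiso)
  exact ⟨r, r.continuous, fun x => (hr x).1, fun x => (hr x).2⟩
end

section
/- A flow of a metric space X is topological expansive if and only if it is rescaling expansive and all its singularities are isolated points of X. -/
/-! The singular set of a flow is closed, and it is open once its points are isolated; so a gauge
may be redefined on the singular set independently of its complement. Halving a topological gauge
and setting it to `0` on the singular set gives a rescaling gauge; conversely, setting a rescaling
gauge equal to an isolation radius on the singular set gives a topological gauge. At a singularity
`x` the condition at `t = 0` alone forces `y = x`, and off the singular set the two gauges compare
as required because orbits of regular points stay regular. -/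

open Set Metric

def TopExpansiveOn {X : Type*} [MetricSpace X] (φ : ℝ → X → X) (A : Set X) : Prop :=
  ∀ ε : ℝ, 0 < ε → ∃ δ : X → ℝ, ContinuousOn δ A ∧ (∀ x ∈ A, 0 < δ x) ∧
    ∀ x ∈ A, ∀ y ∈ A, ∀ α : ℝ → ℝ, Continuous α → α 0 = 0 →
      (∀ t : ℝ, dist (φ t x) (φ (α t) y) < δ (φ t x)) →
      ∃ s ∈ Set.Icc (-ε) ε, φ s x = y

def RescalingExpansive {X : Type*} [MetricSpace X] (φ : ℝ → X → X) : Prop :=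
  ∀ ε : ℝ, 0 < ε → ∃ δ : X → ℝ, Continuous δ ∧ (∀ x, 0 ≤ δ x) ∧
    (∀ x, δ x = 0 ↔ ∀ t : ℝ, φ t x = x) ∧
    ∀ x y : X, ∀ α : ℝ → ℝ, Continuous α → α 0 = 0 →
      (∀ t : ℝ, dist (φ t x) (φ (α t) y) ≤ δ (φ t x)) →
      ∃ s ∈ Set.Icc (-ε) ε, φ s x = y

def singularSet {X : Type*} (φ : ℝ → X → X) : Set X := {x | ∀ t : ℝ, φ t x = x}

theorem continuous_piecewise_of_isClosed_of_isOpen_singleton {X Y : Type*} [TopologicalSpace X]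
    [TopologicalSpace Y] {S : Set X} [∀ x, Decidable (x ∈ S)] (hS : IsClosed S)
    (hiso : ∀ x ∈ S, IsOpen ({x} : Set X)) (f : X → Y) {g : X → Y} (hg : Continuous g) :
    Continuous (S.piecewise f g) := by
  refine continuous_iff_continuousAt.2 fun x => ?_
  by_cases hx : x ∈ S
  · rw [ContinuousAt, (isOpen_singleton_iff_nhds_eq_pure x).1 (hiso x hx)]
    exact tendsto_pure_nhds _ x
  · exact hg.continuousAt.congr
      ((piecewise_eqOn_compl S f g).eventuallyEq_of_mem (hS.isOpen_compl.mem_nhds hx)).symm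

namespace IsFlow

variable {X : Type*} [TopologicalSpace X] {φ : ℝ → X → X}

theorem isClosed_singularSet [T2Space X] (hφ : IsFlow φ) : IsClosed (singularSet φ) := by
  have hφt : ∀ t, Continuous (φ t) := fun t =>
    hφ.2.2.comp (continuous_const.prodMk continuous_id)
  simpa only [singularSet, ofPred_forall] using
    isClosed_iInter fun t => isClosed_eq (hφt t) continuous_id'

theorem mem_singularSet_of_apply_mem (hφ : IsFlow φ) {x : X} {t : ℝ}
    (h : φ t x ∈ singularSet φ) : x ∈ singularSet φ := by
  have hfix : φ t x = x := by
    have := h (-t)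
    rwa [← hφ.2.1, neg_add_cancel, hφ.1, eq_comm] at this
  intro s
  rw [← hfix, h s]

theorem exists_mem_Icc_apply_eq_self (hφ : IsFlow φ) {ε : ℝ} (hε : 0 ≤ ε) (x : X) :
    ∃ s ∈ Icc (-ε) ε, φ s x = x :=
  ⟨0, ⟨neg_nonpos.2 hε, hε⟩, hφ.1 x⟩

end IsFlow

section Expansive

variable {X : Type*} [MetricSpace X] {φ : ℝ → X → X}

theorem isOpen_singleton_of_ball_eq {x : X} {ρ : ℝ} (h : ball x ρ = {x}) :
    IsOpen ({x} : Set X) :=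
  h ▸ isOpen_ball

theorem TopExpansive.ball_eq_singleton (h : TopExpansive φ) (hφ : IsFlow φ) {x : X}
    (hx : x ∈ singularSet φ) : ∃ ρ : ℝ, 0 < ρ ∧ ball x ρ = {x} := by
  obtain ⟨δ, -, hδpos, hδ⟩ := h 1 one_pos
  refine ⟨δ x, hδpos x, eq_singleton_iff_unique_mem.2 ⟨mem_ball_self (hδpos x), fun y hy => ?_⟩⟩
  obtain ⟨s, -, rfl⟩ := hδ x y (fun _ => 0) continuous_const rfl fun t => by
    rwa [hx t, hφ.1, dist_comm]
  exact hx s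

theorem TopExpansive.rescalingExpansive (h : TopExpansive φ) (hφ : IsFlow φ) :
    RescalingExpansive φ := by
  classical
  intro ε hε
  obtain ⟨δ, hδc, hδpos, hδ⟩ := h ε hε
  have hcont : Continuous ((singularSet φ).piecewise 0 fun x => δ x / 2) :=
    continuous_piecewise_of_isClosed_of_isOpen_singleton hφ.isClosed_singularSet
      (fun x hx => (h.ball_eq_singleton hφ hx).elim fun _ hρ => isOpen_singleton_of_ball_eq hρ.2)
      0 (hδc.div_const 2)
  refine ⟨_, hcont, fun x => ?_, fun x => ?_, fun x y α hα hα0 hd => ?_⟩ <;>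
    by_cases hx : x ∈ singularSet φ
  · rw [piecewise_eq_of_mem _ _ _ hx, Pi.zero_apply]
  · rw [piecewise_eq_of_notMem _ _ _ hx]
    exact (half_pos (hδpos x)).le
  · exact iff_of_true (piecewise_eq_of_mem _ _ _ hx) hx
  · rw [piecewise_eq_of_notMem _ _ _ hx]
    exact iff_of_false (half_pos (hδpos x)).ne' hx
  · have h0 := hd 0
    rw [hφ.1, hα0, hφ.1, piecewise_eq_of_mem _ _ _ hx, Pi.zero_apply, dist_le_zero] at h0
    exact h0 ▸ hφ.exists_mem_Icc_apply_eq_self hε.le x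
  · refine hδ x y α hα hα0 fun t => (hd t).trans_lt ?_
    rw [piecewise_eq_of_notMem _ _ _ (mt hφ.mem_singularSet_of_apply_mem hx)]
    exact half_lt_self (hδpos _)

theorem RescalingExpansive.topExpansive (h : RescalingExpansive φ) (hφ : IsFlow φ)
    (hiso : ∀ x ∈ singularSet φ, ∃ ρ : ℝ, 0 < ρ ∧ ball x ρ = {x}) : TopExpansive φ := by
  classical
  intro ε hε
  obtain ⟨δ, hδc, hδnn, hδ0, hδ⟩ := h ε hε
  choose! ρ hρpos hρball using hiso
  refine ⟨(singularSet φ).piecewise ρ δ,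
    continuous_piecewise_of_isClosed_of_isOpen_singleton hφ.isClosed_singularSet
      (fun x hx => isOpen_singleton_of_ball_eq (hρball x hx)) ρ hδc,
    fun x => ?_, fun x y α hα hα0 hd => ?_⟩ <;> by_cases hx : x ∈ singularSet φ
  · rw [piecewise_eq_of_mem _ _ _ hx]
    exact hρpos x hx
  · rw [piecewise_eq_of_notMem _ _ _ hx]
    exact (hδnn x).lt_of_ne' (mt (hδ0 x).1 hx)
  · have h0 := hd 0
    rw [hφ.1, hα0, hφ.1, piecewise_eq_of_mem _ _ _ hx, dist_comm, ← mem_ball, hρball x hx]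
      at h0
    exact h0 ▸ hφ.exists_mem_Icc_apply_eq_self hε.le x
  · refine hδ x y α hα hα0 fun t => (hd t).le.trans_eq ?_
    rw [piecewise_eq_of_notMem _ _ _ (mt hφ.mem_singularSet_of_apply_mem hx)]

end Expansive

theorem stmt15 {X : Type*} [MetricSpace X] (φ : ℝ → X → X)
    (hflow : IsFlow φ) :
    TopExpansive φ ↔
      (RescalingExpansive φ ∧
        ∀ x : X, (∀ t : ℝ, φ t x = x) → ∃ ρ : ℝ, 0 < ρ ∧ Metric.ball x ρ = {x}) :=
  ⟨fun h => ⟨h.rescalingExpansive hflow, fun _ hx => h.ball_eq_singleton hflow hx⟩,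
    fun ⟨hres, hiso⟩ => hres.topExpansive hflow hiso⟩
end

section
/- For every metric space X and every continuous ρ : X → (0,∞) there exists a continuous γ : X → (0,∞) such that γ ≪ ρ, i.e. whenever x ∈ X and y ∈ B(x, γ(x)), one has γ(x) < ρ(y). -/
theorem stmt16 {X : Type*} [MetricSpace X] (ρ : X → ℝ)
    (hρc : Continuous ρ) (hρ : ∀ x, 0 < ρ x) :
    ∃ γ : X → ℝ, Continuous γ ∧ (∀ x, 0 < γ x) ∧
      ∀ x y : X, dist x y < γ x → γ x < ρ y := by
  by_cases hne : Nonempty X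
  · set σ : X → ℝ := fun x => ⨅ y, (ρ y + dist x y) with hσ
    have hbdd : ∀ x, BddBelow (Set.range fun y => ρ y + dist x y) := by
      intro x
      refine ⟨0, ?_⟩
      rintro _ ⟨y, rfl⟩
      dsimp only
      have := (hρ y).le
      have := dist_nonneg (x := x) (y := y)
      linarith
    have key : ∀ x z : X, σ x ≤ σ z + dist x z := by
      intro x z
      have h : ∀ y, σ x - dist x z ≤ ρ y + dist z y := by
        intro y
        have h1 : σ x ≤ ρ y + dist x y := ciInf_le (hbdd x) y
        have h2 := dist_triangle x z y
        linarith
      have := le_ciInf h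
      simpa [hσ] using by linarith [le_ciInf h]
    have hlip : LipschitzWith 1 σ := by
      apply LipschitzWith.of_dist_le_mul
      intro x z
      rw [Real.dist_eq, NNReal.coe_one, one_mul, abs_sub_le_iff]
      constructor
      · have := key x z; linarith
      · have := key z x; rw [dist_comm z x] at this; linarith
    have hpos : ∀ x, 0 < σ x := by
      intro x
      have hε : 0 < ρ x / 2 := by linarith [hρ x]
      obtain ⟨δ, hδ, hδ'⟩ := Metric.continuous_iff.mp hρc x (ρ x / 2) hε
      have hmin : 0 < min δ (ρ x / 2) := lt_min hδ hε
      have : min δ (ρ x / 2) ≤ σ x := by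
        apply le_ciInf
        intro y
        by_cases h : dist y x < δ
        · have := hδ' y h
          rw [Real.dist_eq, abs_lt] at this
          have := dist_nonneg (x := x) (y := y)
          have := min_le_right δ (ρ x / 2)
          linarith
        · push_neg at h
          have := min_le_left δ (ρ x / 2)
          rw [dist_comm y x] at h
          have := (hρ y).le
          linarith
      linarith
    refine ⟨fun x => σ x / 2, ?_, fun x => by linarith [hpos x], ?_⟩
    · exact hlip.continuous.div_const 2
    · intro x y hxy
      have h1 : σ x ≤ ρ y + dist x y := ciInf_le (hbdd x) y
      linarith
  · refine ⟨fun _ => 1, continuous_const, ?_, ?_⟩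
    · intro x; exact absurd ⟨x⟩ hne
    · intro x; exact absurd ⟨x⟩ hne
end

section
/- For a flow φ on a compact metric space X, the entropy-like invariant e*(φ) equals the topological entropy e(φ). -/
open Set Metric

noncomputable def sepMax {X : Type*} [MetricSpace X] (φ : ℝ → X → X)
    (t : ℝ) (δ : X → ℝ) (K : Set X) : ℕ :=
  sSup {n : ℕ | ∃ E : Finset X, ↑E ⊆ K ∧ E.card = n ∧
    ∀ x ∈ E, ∀ y ∈ E, x ≠ y → ∃ s ∈ Set.Icc (0 : ℝ) t, δ (φ s x) ≤ dist (φ s x) (φ s y)}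

noncomputable def betaInf {X : Type*} [MetricSpace X] (φ : ℝ → X → X)
    (t : ℝ) (δ : X → ℝ) (K : Set X) : ℝ :=
  sInf ((fun p : X × ℝ => δ (φ p.2 p.1)) '' (K ×ˢ Set.Icc (0 : ℝ) t))

noncomputable def eStar {X : Type*} [MetricSpace X] (φ : ℝ → X → X) : EReal :=
  ⨆ (K : Set X) (_ : IsCompact K) (δ : X → ℝ) (_ : Continuous δ) (_ : ∀ x, 0 < δ x),
    Filter.limsup
      (fun t : ℝ =>
        (((1 / t) * Real.log ((sepMax φ t δ K : ℝ) / betaInf φ t δ K)) : EReal))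
      Filter.atTop

noncomputable def sepMaxConst {X : Type*} [MetricSpace X] (φ : ℝ → X → X)
    (t ε : ℝ) : ℕ :=
  sSup {n : ℕ | ∃ E : Finset X, E.card = n ∧
    ∀ x ∈ E, ∀ y ∈ E, x ≠ y → ∃ s ∈ Set.Icc (0 : ℝ) t, ε ≤ dist (φ s x) (φ s y)}

noncomputable def entFlow {X : Type*} [MetricSpace X] (φ : ℝ → X → X) : EReal :=
  ⨆ (ε : ℝ) (_ : 0 < ε),
    Filter.limsup
      (fun t : ℝ => (((1 / t) * Real.log (sepMaxConst φ t ε : ℝ)) : EReal))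
      Filter.atTop

/-- The set of cardinalities of `(t,ε)`-separated sets is bounded above on a compact space. -/
lemma sepConst_bddAbove {X : Type*} [MetricSpace X] [CompactSpace X] (φ : ℝ → X → X)
    (hφ : Continuous (fun p : ℝ × X => φ p.1 p.2)) (t ε : ℝ) (hε : 0 < ε) :
    BddAbove {n : ℕ | ∃ E : Finset X, E.card = n ∧
      ∀ x ∈ E, ∀ y ∈ E, x ≠ y → ∃ s ∈ Set.Icc (0 : ℝ) t, ε ≤ dist (φ s x) (φ s y)} := by
  have hS : IsCompact (Set.Icc (0:ℝ) t ×ˢ (Set.univ : Set X)) :=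
    isCompact_Icc.prod isCompact_univ
  have huc := hS.uniformContinuousOn_of_continuous hφ.continuousOn
  rw [Metric.uniformContinuousOn_iff] at huc
  obtain ⟨r, hr, hru⟩ := huc ε hε
  obtain ⟨C, -, hCfin, hCcov⟩ := finite_cover_balls_of_compact (isCompact_univ : IsCompact (Set.univ : Set X)) (half_pos hr)
  have hc : ∀ x : X, ∃ y ∈ C, x ∈ ball y (r/2) := by
    intro x
    have := hCcov (mem_univ x)
    simpa using this
  choose c hc1 hc2 using hc
  refine ⟨hCfin.toFinset.card, ?_⟩
  rintro n ⟨E, rfl, hsep⟩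
  have key : ∀ x ∈ E, ∀ y ∈ E, x ≠ y → r ≤ dist x y := by
    intro x hx y hy hxy
    by_contra h
    push_neg at h
    obtain ⟨s, hs, hd⟩ := hsep x hx y hy hxy
    have hds : dist ((s, x) : ℝ × X) (s, y) < r := by
      rw [Prod.dist_eq]
      simpa [dist_self] using max_lt hr h
    have := hru (s, x) ⟨hs, mem_univ _⟩ (s, y) ⟨hs, mem_univ _⟩ hds
    exact absurd hd (not_le.2 this)
  apply Finset.card_le_card_of_injOn c (fun x _ => hCfin.mem_toFinset.2 (hc1 x))
  intro x hx y hy hcxy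
  by_contra hxy
  have h1 := hc2 x
  have h2 := hc2 y
  rw [mem_ball] at h1 h2
  have : dist x y ≤ dist x (c x) + dist y (c y) := by
    rw [hcxy]
    exact (dist_triangle x (c y) y).trans (by rw [dist_comm (c y) y])
  have := key x (by exact_mod_cast hx) y (by exact_mod_cast hy) hxy
  linarith

lemma one_mem_sepConst {X : Type*} [MetricSpace X] (φ : ℝ → X → X) (x0 : X) (t ε : ℝ) :
    1 ∈ {n : ℕ | ∃ E : Finset X, E.card = n ∧
      ∀ x ∈ E, ∀ y ∈ E, x ≠ y → ∃ s ∈ Set.Icc (0 : ℝ) t, ε ≤ dist (φ s x) (φ s y)} := by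
  refine ⟨{x0}, Finset.card_singleton x0, ?_⟩
  intro x hx y hy hxy
  simp only [Finset.mem_singleton] at hx hy
  exact absurd (hx.trans hy.symm) hxy

lemma sepMaxConst_one_le {X : Type*} [MetricSpace X] [CompactSpace X] [Nonempty X]
    (φ : ℝ → X → X) (hφ : Continuous (fun p : ℝ × X => φ p.1 p.2)) (t ε : ℝ) (hε : 0 < ε) :
    1 ≤ sepMaxConst φ t ε :=
  le_csSup (sepConst_bddAbove φ hφ t ε hε) (one_mem_sepConst φ (Classical.arbitrary X) t ε)

lemma coe_helper (t a : ℝ) : 1 / (t : EReal) * (a : EReal) = (((1 / t) * a : ℝ) : EReal) := by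
  rw [EReal.coe_mul, one_div, one_div, EReal.coe_inv]

lemma limsup_coe_fix (g : ℝ → ℝ) :
    Filter.limsup (fun t : ℝ => 1 / (t : EReal) * ((g t : ℝ) : EReal)) Filter.atTop
      = Filter.limsup (fun t : ℝ => (((1 / t) * g t : ℝ) : EReal)) Filter.atTop :=
  Filter.limsup_congr (Filter.Eventually.of_forall fun t => coe_helper t (g t))

lemma aux_limsup_le {v w : ℝ → ℝ} (hw : Filter.Tendsto w Filter.atTop (nhds 0)) :
    Filter.limsup (fun t => ((v t + w t : ℝ) : EReal)) Filter.atTop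
      ≤ Filter.limsup (fun t => ((v t : ℝ) : EReal)) Filter.atTop := by
  have hb0 : Filter.limsup (fun t => ((w t : ℝ) : EReal)) Filter.atTop = 0 := by
    have h : Filter.Tendsto (fun t => ((w t : ℝ) : EReal)) Filter.atTop (nhds ((0:ℝ) : EReal)) :=
      EReal.tendsto_coe.2 hw
    simpa using h.limsup_eq
  have hfun : (fun t => ((v t + w t : ℝ) : EReal))
      = (fun t => ((v t : ℝ) : EReal)) + (fun t => ((w t : ℝ) : EReal)) := by
    funext t
    simp [EReal.coe_add]
  rw [hfun]
  refine le_trans (EReal.limsup_add_le ?_ ?_) ?_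
  · exact Or.inr (by simp [hb0])
  · exact Or.inr (by simp [hb0])
  · rw [hb0, add_zero]

lemma aux_limsup {v w : ℝ → ℝ} (hw : Filter.Tendsto w Filter.atTop (nhds 0)) :
    Filter.limsup (fun t => ((v t + w t : ℝ) : EReal)) Filter.atTop
      = Filter.limsup (fun t => ((v t : ℝ) : EReal)) Filter.atTop := by
  refine le_antisymm (aux_limsup_le hw) ?_
  have h2 := aux_limsup_le (v := fun t => v t + w t) (w := fun t => -w t)
    (by simpa using hw.neg)
  have hfun : (fun t => ((v t + w t + -w t : ℝ) : EReal)) = fun t => ((v t : ℝ) : EReal) := by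
    funext t; norm_num
  rwa [hfun] at h2

theorem stmt17 {X : Type*} [MetricSpace X] [CompactSpace X] (φ : ℝ → X → X)
    (hflow : IsFlow φ) :
    eStar φ = entFlow φ := by
  obtain ⟨h0, hadd, hcont⟩ := hflow
  rcases isEmpty_or_nonempty X with hX | hX
  · -- X is empty : both sides are 0
    have hsep : ∀ t ε, sepMaxConst φ t ε = 0 := by
      intro t ε
      have : {n : ℕ | ∃ E : Finset X, E.card = n ∧
          ∀ x ∈ E, ∀ y ∈ E, x ≠ y → ∃ s ∈ Set.Icc (0 : ℝ) t, ε ≤ dist (φ s x) (φ s y)}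
          = {0} := by
        ext n
        constructor
        · rintro ⟨E, rfl, -⟩
          simp [Finset.eq_empty_of_isEmpty E]
        · rintro rfl
          exact ⟨∅, by simp⟩
      rw [sepMaxConst, this, csSup_singleton]
    have hsep2 : ∀ t δ K, sepMax φ t δ K = 0 := by
      intro t δ K
      have : {n : ℕ | ∃ E : Finset X, ↑E ⊆ K ∧ E.card = n ∧
          ∀ x ∈ E, ∀ y ∈ E, x ≠ y → ∃ s ∈ Set.Icc (0 : ℝ) t,
            δ (φ s x) ≤ dist (φ s x) (φ s y)} = {0} := by
        ext n
        constructor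
        · rintro ⟨E, -, rfl, -⟩
          simp [Finset.eq_empty_of_isEmpty E]
        · rintro rfl
          exact ⟨∅, by simp⟩
      rw [sepMax, this, csSup_singleton]
    have hent : entFlow φ = 0 := by
      have hterm : ∀ ε : ℝ, Filter.limsup
          (fun t : ℝ => (((1 / t) * Real.log (sepMaxConst φ t ε : ℝ)) : EReal))
          Filter.atTop = 0 := by
        intro ε
        have : (fun t : ℝ => (((1 / t) * Real.log (sepMaxConst φ t ε : ℝ)) : EReal))
            = fun _ => (0 : EReal) := by
          funext t
          simp [hsep]
        rw [this]
        exact Filter.limsup_const _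
      refine le_antisymm (iSup_le fun ε => iSup_le fun hε => le_of_eq (hterm ε)) ?_
      refine le_iSup_of_le 1 (le_iSup_of_le one_pos ?_)
      exact le_of_eq (hterm 1).symm
    have hest : eStar φ = 0 := by
      have hterm : ∀ (δ : X → ℝ) (K : Set X), Filter.limsup
          (fun t : ℝ =>
            (((1 / t) * Real.log ((sepMax φ t δ K : ℝ) / betaInf φ t δ K)) : EReal))
          Filter.atTop = 0 := by
        intro δ K
        have : (fun t : ℝ =>
            (((1 / t) * Real.log ((sepMax φ t δ K : ℝ) / betaInf φ t δ K)) : EReal))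
            = fun _ => (0 : EReal) := by
          funext t
          simp [hsep2]
        rw [this]
        exact Filter.limsup_const _
      refine le_antisymm (iSup_le fun K => iSup_le fun hK => iSup_le fun δ =>
        iSup_le fun _ => iSup_le fun _ => le_of_eq (hterm δ K)) ?_
      refine le_iSup_of_le ∅ (le_iSup_of_le isCompact_empty (le_iSup_of_le (fun _ => 1)
        (le_iSup_of_le continuous_const (le_iSup_of_le (fun _ => one_pos) ?_))))
      exact le_of_eq (hterm (fun _ => 1) ∅).symm
    rw [hent, hest]
  · -- X nonempty
    have x0 : X := Classical.arbitrary X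
    apply le_antisymm
    · -- eStar ≤ entFlow
      refine iSup_le fun K => iSup_le fun hK => iSup_le fun δ => iSup_le fun hδc =>
        iSup_le fun hδp => ?_
      obtain ⟨xm, -, hxm⟩ := (isCompact_univ : IsCompact (Set.univ : Set X)).exists_isMinOn
        ⟨x0, mem_univ x0⟩ hδc.continuousOn
      set m := δ xm with hmdef
      have hm : 0 < m := hδp xm
      have hmle : ∀ y : X, m ≤ δ y := fun y => hxm (mem_univ y)
      rcases K.eq_empty_or_nonempty with rfl | ⟨xK, hxK⟩
      · -- K = ∅ : term is 0, and entFlow ≥ 0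
        have hsep0 : ∀ t, sepMax φ t δ (∅ : Set X) = 0 := by
          intro t
          have : {n : ℕ | ∃ E : Finset X, ↑E ⊆ (∅ : Set X) ∧ E.card = n ∧
              ∀ x ∈ E, ∀ y ∈ E, x ≠ y → ∃ s ∈ Set.Icc (0 : ℝ) t,
                δ (φ s x) ≤ dist (φ s x) (φ s y)} = {0} := by
            ext n
            constructor
            · rintro ⟨E, hE, rfl, -⟩
              have : E = ∅ := Finset.coe_eq_empty.mp (subset_empty_iff.mp hE)
              simp [this]
            · rintro rfl
              exact ⟨∅, by simp⟩
          rw [sepMax, this, csSup_singleton]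
        have hfun : (fun t : ℝ =>
            (((1 / t) * Real.log ((sepMax φ t δ (∅ : Set X) : ℝ) / betaInf φ t δ ∅)) : EReal))
            = fun _ => (0 : EReal) := by
          funext t
          simp [hsep0]
        rw [hfun, Filter.limsup_const]
        refine le_iSup_of_le 1 (le_iSup_of_le one_pos ?_)
        refine Filter.le_limsup_of_frequently_le ?_
        refine ((Filter.eventually_ge_atTop (1:ℝ)).mono ?_).frequently
        intro t ht
        rw [coe_helper]
        refine EReal.coe_nonneg.2 ?_
        have hN : 1 ≤ sepMaxConst φ t 1 := sepMaxConst_one_le φ hcont t 1 one_pos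
        have h1 : (1:ℝ) ≤ (sepMaxConst φ t 1 : ℝ) := by exact_mod_cast hN
        have := Real.log_nonneg h1
        positivity
      · -- K nonempty
        have hw : Filter.Tendsto (fun t : ℝ => (-Real.log m) / t) Filter.atTop (nhds 0) :=
          Filter.Tendsto.div_atTop tendsto_const_nhds Filter.tendsto_id
        have hbound : ∀ᶠ t in Filter.atTop,
            (((1 / t) * Real.log ((sepMax φ t δ K : ℝ) / betaInf φ t δ K)) : EReal)
            ≤ (((1 / t) * Real.log (sepMaxConst φ t m : ℝ) + (-Real.log m) / t : ℝ) : EReal) := by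
          filter_upwards [Filter.eventually_gt_atTop (0:ℝ)] with t ht
          rw [coe_helper, EReal.coe_le_coe_iff]
          have hbdd := sepConst_bddAbove φ hcont t m hm
          have hsub : {n : ℕ | ∃ E : Finset X, ↑E ⊆ K ∧ E.card = n ∧
              ∀ x ∈ E, ∀ y ∈ E, x ≠ y → ∃ s ∈ Set.Icc (0 : ℝ) t,
                δ (φ s x) ≤ dist (φ s x) (φ s y)}
              ⊆ {n : ℕ | ∃ E : Finset X, E.card = n ∧
              ∀ x ∈ E, ∀ y ∈ E, x ≠ y → ∃ s ∈ Set.Icc (0 : ℝ) t,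
                m ≤ dist (φ s x) (φ s y)} := by
            rintro n ⟨E, -, rfl, hsep⟩
            refine ⟨E, rfl, ?_⟩
            intro x hx y hy hxy
            obtain ⟨s, hs, hd⟩ := hsep x hx y hy hxy
            exact ⟨s, hs, le_trans (hmle _) hd⟩
          have hS1 : 1 ≤ sepMax φ t δ K := by
            refine le_csSup (hbdd.mono hsub) ?_
            refine ⟨{xK}, by simpa using hxK, Finset.card_singleton xK, ?_⟩
            intro x hx y hy hxy
            simp only [Finset.mem_singleton] at hx hy
            exact absurd (hx.trans hy.symm) hxy
          have hSN : sepMax φ t δ K ≤ sepMaxConst φ t m := by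
            refine csSup_le_csSup hbdd ⟨0, ∅, by simp⟩ hsub
          have hN1 : 1 ≤ sepMaxConst φ t m := le_trans hS1 hSN
          have hβ : m ≤ betaInf φ t δ K := by
            refine le_csInf ⟨δ (φ 0 xK), ⟨(xK, 0), ⟨hxK, le_rfl, ht.le⟩, rfl⟩⟩ ?_
            rintro b ⟨⟨x, s⟩, -, rfl⟩
            exact hmle _
          have hNr : (1:ℝ) ≤ (sepMaxConst φ t m : ℝ) := by exact_mod_cast hN1
          have hSr : (1:ℝ) ≤ (sepMax φ t δ K : ℝ) := by exact_mod_cast hS1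
          have hSNr : (sepMax φ t δ K : ℝ) ≤ (sepMaxConst φ t m : ℝ) := by exact_mod_cast hSN
          have key : (sepMax φ t δ K : ℝ) / betaInf φ t δ K ≤ (sepMaxConst φ t m : ℝ) / m :=
            div_le_div₀ (by linarith) hSNr hm hβ
          have hpos : 0 < (sepMax φ t δ K : ℝ) / betaInf φ t δ K :=
            div_pos (by linarith) (lt_of_lt_of_le hm hβ)
          have hlog := Real.log_le_log hpos key
          have h2 : (1 / t) * Real.log ((sepMax φ t δ K : ℝ) / betaInf φ t δ K)
              ≤ (1 / t) * Real.log ((sepMaxConst φ t m : ℝ) / m) :=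
            mul_le_mul_of_nonneg_left hlog (by positivity)
          refine h2.trans (le_of_eq ?_)
          rw [Real.log_div (by linarith) (ne_of_gt hm)]
          ring
        refine le_trans (Filter.limsup_le_limsup hbound) ?_
        refine le_trans (le_of_eq (aux_limsup
          (v := fun t : ℝ => (1 / t) * Real.log (sepMaxConst φ t m : ℝ))
          (w := fun t : ℝ => (-Real.log m) / t) hw)) ?_
        refine le_trans (le_of_eq
          (limsup_coe_fix (fun t : ℝ => Real.log (sepMaxConst φ t m : ℝ))).symm) ?_
        exact le_iSup_of_le m (le_iSup_of_le hm le_rfl)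
    · -- entFlow ≤ eStar
      refine iSup_le fun ε => iSup_le fun hε => ?_
      have hsep_eq : ∀ t, sepMax φ t (fun _ => ε) univ = sepMaxConst φ t ε := by
        intro t
        unfold sepMax sepMaxConst
        congr 1
        ext n
        simp
      have hbeta : ∀ t : ℝ, 0 ≤ t → betaInf φ t (fun _ => ε) univ = ε := by
        intro t ht
        unfold betaInf
        have hne : ((univ : Set X) ×ˢ Set.Icc (0:ℝ) t).Nonempty :=
          ⟨(x0, 0), mem_univ _, le_rfl, ht⟩
        rw [Set.Nonempty.image_const hne, csInf_singleton]
      have hw : Filter.Tendsto (fun t : ℝ => (-Real.log ε) / t) Filter.atTop (nhds 0) :=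
        Filter.Tendsto.div_atTop tendsto_const_nhds Filter.tendsto_id
      have heq : ∀ᶠ t in Filter.atTop,
          (((1 / t) * Real.log ((sepMax φ t (fun _ => ε) univ : ℝ)
            / betaInf φ t (fun _ => ε) univ)) : EReal)
          = (((1 / t) * Real.log (sepMaxConst φ t ε : ℝ) + (-Real.log ε) / t : ℝ) : EReal) := by
        filter_upwards [Filter.eventually_ge_atTop (0:ℝ)] with t ht
        rw [coe_helper, EReal.coe_eq_coe_iff, hsep_eq t, hbeta t ht]
        have hN : 1 ≤ sepMaxConst φ t ε := sepMaxConst_one_le φ hcont t ε hε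
        have hNr : (1:ℝ) ≤ (sepMaxConst φ t ε : ℝ) := by exact_mod_cast hN
        rw [Real.log_div (by linarith) (ne_of_gt hε)]
        ring
      refine le_trans (le_of_eq
        (limsup_coe_fix (fun t : ℝ => Real.log (sepMaxConst φ t ε : ℝ)))) ?_
      refine le_trans (le_of_eq (aux_limsup
        (v := fun t : ℝ => (1 / t) * Real.log (sepMaxConst φ t ε : ℝ))
        (w := fun t : ℝ => (-Real.log ε) / t) hw).symm) ?_
      refine le_trans (le_of_eq (Filter.limsup_congr heq).symm) ?_
      exact le_iSup_of_le univ (le_iSup_of_le isCompact_univ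
        (le_iSup_of_le (fun _ => ε) (le_iSup_of_le continuous_const
          (le_iSup_of_le (fun _ => hε) le_rfl))))
end

section
/- Let φ be a topological expansive flow on a metric space X that is dynamically isolated at infinity. Then the growth rate of periodic orbits satisfies limsup_{t→∞} (1/t) log v(t) ≤ e*(φ), where v(t) is the number of periodic orbits of period at most t. -/
open Set Metric

noncomputable def periodicOrbitCount {X : Type*} (φ : ℝ → X → X) (t : ℝ) : ℕ :=
  Nat.card {O : Set X // ∃ (x : X) (T : ℝ), 0 < T ∧ T ≤ t ∧ φ T x = x ∧
    (∀ s : ℝ, 0 < s → s < T → φ s x ≠ x) ∧ O = Set.range (fun s : ℝ => φ s x)}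

/-!
Expansivity at a continuous scale `δ₁` forces two distinct periodic orbits, reparametrized
linearly so that their periods match, to be `δ₁`-apart at some time. If the periods `T₁` and
`T₂` differ by less than a smaller continuous scale `δ`, the linear time change moves points by
less than `δ`, so the orbits are already `δ`-separated at some time of `[0, T₁)`. Every periodic
orbit meets the compact set `K`. Sorting the orbits of period at most `t` into the
`⌊t / β⌋ + 1` windows of length `β = β(t, δ, K)` therefore gives, window by window,
`(t, δ)`-separated subsets of `K`, whence `v(t) ≤ (t / β + 1) S(t, δ, K) ≤ 2t S(t, δ, K) / β`;
the factor `2t` does not affect the exponential growth rate.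
-/

open Filter Topology
open scoped NNReal

theorem Nat.card_le_mul_card_of_mapsTo {α β : Type*} [DecidableEq β] {f : α → β} {s : Finset β}
    (hf : ∀ a, f a ∈ s) (n : ℕ) (hn : ∀ (E : Finset α) (b : β), (∀ a ∈ E, f a = b) → E.card ≤ n) :
    Nat.card α ≤ n * s.card := by
  rcases finite_or_infinite α with hα | hα
  · have := Fintype.ofFinite α
    rw [Nat.card_eq_fintype_card, ← Finset.card_univ]
    exact Finset.card_le_mul_card_image_of_maps_to (fun a _ => hf a) n
      fun b _ => hn _ b fun a ha => (Finset.mem_filter.mp ha).2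
  · simp [Nat.card_eq_zero_of_infinite]

theorem abs_sub_lt_of_floor_div_eq {a a' b : ℝ} (hb : 0 < b) (ha : 0 ≤ a) (ha' : 0 ≤ a')
    (h : ⌊a / b⌋₊ = ⌊a' / b⌋₊) : |a - a'| < b := by
  have : |a / b - a' / b| < 1 := Int.abs_sub_lt_one_of_floor_eq_floor (by
    rw [← Int.natCast_floor_eq_floor (by positivity), ← Int.natCast_floor_eq_floor (by positivity),
      h])
  rwa [← sub_div, abs_div, abs_of_pos hb, div_lt_one hb] at this

theorem tendsto_log_two_mul_div_atTop :
    Tendsto (fun t : ℝ => 1 / t * Real.log (2 * t)) atTop (𝓝 0) := by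
  have h := (Real.isLittleO_log_id_atTop.tendsto_div_nhds_zero.comp
    (tendsto_id.const_mul_atTop two_pos)).const_mul 2
  rw [mul_zero] at h
  refine h.congr' ?_
  filter_upwards [eventually_ne_atTop 0] with t ht
  simp only [Function.comp_apply, id]
  field_simp

theorem EReal.limsup_le_limsup_of_le_add {α : Type*} {l : Filter α} [l.NeBot]
    {f g a : α → EReal} (ha : Tendsto a l (𝓝 0)) (h : ∀ᶠ x in l, f x ≤ a x + g x) :
    limsup f l ≤ limsup g l :=
  calc limsup f l ≤ limsup (a + g) l := limsup_le_limsup h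
    _ ≤ limsup a l + limsup g l :=
      EReal.limsup_add_le (by simp [ha.limsup_eq]) (by simp [ha.limsup_eq])
    _ = limsup g l := by rw [ha.limsup_eq, zero_add]

theorem log_le_log_two_mul_add_log_div {t b M N : ℝ} (ht : 1 ≤ t) (hb : 0 < b) (hb1 : b ≤ 1)
    (hM : 1 ≤ M) (hN0 : 0 ≤ N) (hN : N ≤ (⌊t / b⌋₊ + 1) * M) :
    Real.log N ≤ Real.log (2 * t) + Real.log (M / b) := by
  have hMb : 1 ≤ M / b := by rw [le_div_iff₀ hb, one_mul]; linarith
  rw [← Real.log_mul (by positivity) (by positivity)]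
  rcases hN0.eq_or_lt with rfl | hN0
  · rw [Real.log_zero]
    exact Real.log_nonneg (one_le_mul_of_one_le_of_one_le (by linarith) hMb)
  refine Real.log_le_log hN0 (hN.trans ?_)
  have htb : 1 ≤ t / b := by rw [le_div_iff₀ hb, one_mul]; linarith
  have hfloor : (⌊t / b⌋₊ : ℝ) ≤ t / b := Nat.floor_le (by positivity)
  calc (⌊t / b⌋₊ + 1) * M ≤ (2 * (t / b)) * M := by gcongr; linarith
    _ = 2 * t * (M / b) := by ring

theorem IsCompact.exists_card_le_of_isSeparated {X : Type*} [PseudoEMetricSpace X] {K : Set X}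
    (hK : IsCompact K) {ε : ℝ≥0} (hε : ε ≠ 0) :
    ∃ n : ℕ, ∀ E : Finset X, ↑E ⊆ K → IsSeparated ε (E : Set X) → E.card ≤ n := by
  obtain ⟨N, -, hNfin, hN⟩ := exists_finite_isCover_of_isCompact (ε := ε / 2) (by simpa) hK
  have hpack : packingNumber ε K ≠ ⊤ := by
    refine ne_top_of_le_ne_top hNfin.encard_lt_top.ne ?_
    calc packingNumber ε K = packingNumber (2 * (ε / 2)) K := by rw [mul_div_cancel₀ _ two_ne_zero]
      _ ≤ externalCoveringNumber (ε / 2) K := packingNumber_two_mul_le_externalCoveringNumber _ _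
      _ ≤ N.encard := hN.externalCoveringNumber_le_encard
  obtain ⟨n, hn⟩ := ENat.ne_top_iff_exists.mp hpack
  refine ⟨n, fun E hEK hE => ?_⟩
  have := hE.encard_le_packingNumber hEK
  rwa [Set.encard_coe_eq_coe_finsetCard, ← hn, Nat.cast_le] at this

section Flow

variable {X : Type*} {φ : ℝ → X → X}

theorem range_flow_apply (hadd : ∀ s t x, φ (s + t) x = φ s (φ t x)) (a : ℝ) (x : X) :
    (range fun r => φ r (φ a x)) = range fun r => φ r x := by
  have : (fun r => φ r (φ a x)) = (fun r => φ r x) ∘ (Equiv.addRight a) :=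
    funext fun r => (hadd r a x).symm
  rw [this, (Equiv.addRight a).surjective.range_comp]

variable (φ) in
def periodicOrbits (t : ℝ) : Set (Set X) :=
  {O | ∃ (x : X) (T : ℝ), 0 < T ∧ T ≤ t ∧ φ T x = x ∧
    (∀ s : ℝ, 0 < s → s < T → φ s x ≠ x) ∧ O = range fun s : ℝ => φ s x}

variable (φ) in
theorem periodicOrbitCount_eq (t : ℝ) :
    periodicOrbitCount φ t = Nat.card (periodicOrbits φ t) := rfl

theorem exists_mem_of_mem_periodicOrbits (hadd : ∀ s t x, φ (s + t) x = φ s (φ t x))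
    {K : Set X} (hiso : ∀ x : X, (¬ ∀ t : ℝ, φ t x = x) → ∃ s : ℝ, φ s x ∈ K) {t : ℝ}
    {O : Set X} (hO : O ∈ periodicOrbits φ t) :
    ∃ p ∈ K, ∃ T ∈ Ioc 0 t, φ T p = p ∧ O = range fun s => φ s p := by
  obtain ⟨x, T, hT, hTt, hx, hmin, rfl⟩ := hO
  obtain ⟨s, hs⟩ := hiso x fun hfix => hmin (T / 2) (by linarith) (by linarith) (hfix _)
  refine ⟨φ s x, hs, T, ⟨hT, hTt⟩, ?_, (range_flow_apply hadd s x).symm⟩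
  rw [← hadd, add_comm, hadd, hx]

variable [MetricSpace X]

theorem TopExpansive.exists_linear_reparam (hexp : TopExpansive φ) :
    ∃ δ₁ : X → ℝ, Continuous δ₁ ∧ (∀ x, 0 < δ₁ x) ∧ ∀ (x y : X) (c : ℝ),
      (∀ r, dist (φ r x) (φ (c * r) y) < δ₁ (φ r x)) → y ∈ range fun s => φ s x := by
  obtain ⟨δ₁, hδ₁c, hδ₁pos, hδ₁⟩ := hexp 1 one_pos
  refine ⟨δ₁, hδ₁c, hδ₁pos, fun x y c h => ?_⟩
  obtain ⟨s, -, hs⟩ := hδ₁ x y (c * ·) (continuous_const_mul c) (mul_zero c) h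
  exact ⟨s, hs⟩

def IsAdaptedScale (φ : ℝ → X → X) (δ₁ δ : X → ℝ) : Prop :=
  ∀ w z u, dist w z < δ w → |u| ≤ δ w → dist w (φ u z) < δ₁ w

theorem exists_isAdaptedScale (h0 : ∀ x, φ 0 x = x)
    (hcont : Continuous fun p : ℝ × X => φ p.1 p.2) {δ₁ : X → ℝ} (hδ₁c : Continuous δ₁)
    (hδ₁pos : ∀ x, 0 < δ₁ x) :
    ∃ δ : X → ℝ, Continuous δ ∧ (∀ x, δ x ∈ Ioc 0 1) ∧ IsAdaptedScale φ δ₁ δ := by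
  -- the admissible values of `δ w` form an interval, and near each point one positive value is
  -- admissible throughout; a partition of unity glues these local constants together
  let S : X → Set ℝ := fun w =>
    {r | r ∈ Ioc 0 1 ∧ ∀ z u, dist w z < r → |u| ≤ r → dist w (φ u z) < δ₁ w}
  have hconv : ∀ w, Convex ℝ (S w) := fun w => OrdConnected.convex
    ⟨fun a ha b hb r hr => ⟨⟨ha.1.1.trans_le hr.1, hr.2.trans hb.1.2⟩,
      fun z u hz hu => hb.2 z u (hz.trans_le hr.2) (hu.trans hr.2)⟩⟩
  have hloc : ∀ p, ∃ c, ∀ᶠ w in 𝓝 p, c ∈ S w := by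
    intro p
    set ε := δ₁ p / 3 with hε
    have hε0 : 0 < ε := by have := hδ₁pos p; positivity
    have hnear : ∀ᶠ q : ℝ × X in 𝓝 (0, p), φ q.1 q.2 ∈ ball p ε := by
      have := (hcont.tendsto (0, p)).eventually (ball_mem_nhds _ hε0)
      rwa [h0] at this
    obtain ⟨ρ, hρ, hρnear⟩ := Metric.eventually_nhds_iff.mp hnear
    have hδ₁near : ∀ᶠ w in 𝓝 p, 2 * ε < δ₁ w :=
      (hδ₁c.tendsto p).eventually (lt_mem_nhds (by linarith))
    refine ⟨min (ρ / 2) 1, ?_⟩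
    filter_upwards [ball_mem_nhds p (half_pos hρ), ball_mem_nhds p hε0, hδ₁near]
      with w hwρ hwε hδ₁w
    refine ⟨⟨by positivity, min_le_right _ _⟩, fun z u hz hu => ?_⟩
    have hzu : φ u z ∈ ball p ε := by
      have hc : min (ρ / 2) 1 ≤ ρ / 2 := min_le_left _ _
      refine hρnear (y := (u, z)) ?_
      rw [Prod.dist_eq, Real.dist_0_eq_abs, max_lt_iff]
      rw [mem_ball] at hwρ
      exact ⟨by linarith, by linarith [dist_triangle_left z p w]⟩
    calc dist w (φ u z) ≤ dist w p + dist (φ u z) p := dist_triangle_right _ _ _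
      _ < ε + ε := add_lt_add hwε hzu
      _ < δ₁ w := by linarith
  obtain ⟨g, hg⟩ := exists_continuous_forall_mem_convex_of_local_const hconv hloc
  exact ⟨g, g.continuous, fun w => (hg w).1, fun w z u => (hg w).2 z u⟩

theorem exists_le_dist_of_periodic (hadd : ∀ s t x, φ (s + t) x = φ s (φ t x))
    {δ₁ δ : X → ℝ}
    (hδ₁ : ∀ (x y : X) (c : ℝ),
      (∀ r, dist (φ r x) (φ (c * r) y) < δ₁ (φ r x)) → y ∈ range fun s => φ s x)
    (hδ : IsAdaptedScale φ δ₁ δ) {x y : X} {T₁ T₂ : ℝ} (hT₁ : 0 < T₁) (hx : φ T₁ x = x)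
    (hy : φ T₂ y = y) (hT : ∀ s ∈ Ico 0 T₁, |T₁ - T₂| ≤ δ (φ s x))
    (hxy : y ∉ range fun s => φ s x) :
    ∃ s ∈ Ico 0 T₁, δ (φ s x) ≤ dist (φ s x) (φ s y) := by
  set c := T₂ / T₁
  obtain ⟨r, hr⟩ : ∃ r, δ₁ (φ r x) ≤ dist (φ r x) (φ (c * r) y) := by
    by_contra! h
    exact hxy (hδ₁ x y c h)
  -- reduce `r` modulo the period `T₁` of `x`; this moves `c * r` by the same multiple of `T₂`
  obtain ⟨s, hs, k, rfl⟩ : ∃ s ∈ Ico 0 T₁, ∃ k : ℤ, r = s + k • T₁ :=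
    ⟨_, by simpa using toIcoMod_mem_Ico hT₁ 0 r, _, (sub_add_cancel _ _).symm.trans
      (congrArg (· + _) (self_sub_toIcoDiv_zsmul hT₁ 0 r))⟩
  have hperx : Function.Periodic (fun r => φ r x) T₁ := fun r => by simp only [hadd, hx]
  have hpery : Function.Periodic (fun r => φ r y) T₂ := fun r => by simp only [hadd, hy]
  have hcr : c * (s + k • T₁) = c * s + k • T₂ := by
    simp only [c, zsmul_eq_mul]
    field_simp
  rw [hcr, show φ (s + k • T₁) x = φ s x from (hperx.zsmul k) s,
    show φ (c * s + k • T₂) y = φ (c * s) y from (hpery.zsmul k) (c * s)] at hr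
  refine ⟨s, hs, not_lt.mp fun hclose => ?_⟩
  have hu : |c * s - s| ≤ δ (φ s x) := by
    have : c * s - s = s / T₁ * (T₂ - T₁) := by
      simp only [c]
      field_simp
    rw [this, abs_mul, abs_sub_comm, abs_of_nonneg (div_nonneg hs.1 hT₁.le)]
    exact (mul_le_of_le_one_left (abs_nonneg _) ((div_le_one hT₁).mpr hs.2.le)).trans (hT s hs)
  have := hδ _ _ _ hclose hu
  rw [← hadd, sub_add_cancel] at this
  exact (hr.trans_lt this).false

def IsDynSeparated (φ : ℝ → X → X) (t : ℝ) (δ : X → ℝ) (E : Set X) : Prop :=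
  ∀ x ∈ E, ∀ y ∈ E, x ≠ y → ∃ s ∈ Icc 0 t, δ (φ s x) ≤ dist (φ s x) (φ s y)

theorem IsCompact.exists_isSeparated_of_isDynSeparated
    (hcont : Continuous fun p : ℝ × X => φ p.1 p.2) {K : Set X} (hK : IsCompact K) {t b : ℝ}
    {δ : X → ℝ} (hb : 0 < b) (hbδ : ∀ x ∈ K, ∀ s ∈ Icc 0 t, b ≤ δ (φ s x)) :
    ∃ ε : ℝ≥0, ε ≠ 0 ∧ ∀ E ⊆ K, IsDynSeparated φ t δ E → IsSeparated ε E := by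
  obtain ⟨r, hr, hunif⟩ := Metric.uniformContinuousOn_iff.mp
    ((isCompact_Icc.prod hK).uniformContinuousOn_of_continuous hcont.continuousOn) b hb
  refine ⟨(r / 2).toNNReal, (Real.toNNReal_pos.mpr (half_pos hr)).ne',
    fun E hEK hE x hx y hy hxy => ?_⟩
  obtain ⟨s, hs, hsep⟩ := hE x hx y hy hxy
  have hfar : r ≤ dist x y := not_lt.mp fun hclose =>
    (hunif (s, x) ⟨hs, hEK hx⟩ (s, y) ⟨hs, hEK hy⟩ (by simpa [Prod.dist_eq] using hclose)).not_ge
      ((hbδ x (hEK hx) s hs).trans hsep)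
  change ENNReal.ofReal (r / 2) < edist x y
  rw [edist_dist, ENNReal.ofReal_lt_ofReal_iff (by linarith)]
  linarith

theorem betaInf_le (δ : X → ℝ) (hδ : ∀ x, 0 < δ x) {K : Set X} {t s : ℝ} {x : X} (hx : x ∈ K)
    (hs : s ∈ Icc 0 t) : betaInf φ t δ K ≤ δ (φ s x) :=
  csInf_le ⟨0, by rintro _ ⟨p, -, rfl⟩; exact (hδ _).le⟩ ⟨(x, s), ⟨hx, hs⟩, rfl⟩

theorem betaInf_pos (hcont : Continuous fun p : ℝ × X => φ p.1 p.2) {K : Set X}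
    (hK : IsCompact K) (hKne : K.Nonempty) {t : ℝ} (ht : 0 ≤ t) {δ : X → ℝ} (hδc : Continuous δ)
    (hδ : ∀ x, 0 < δ x) : 0 < betaInf φ t δ K := by
  have hcpt : IsCompact ((fun p : X × ℝ => δ (φ p.2 p.1)) '' (K ×ˢ Icc 0 t)) :=
    (hK.prod isCompact_Icc).image (hδc.comp (hcont.comp continuous_swap))
  obtain ⟨p, -, hp⟩ := hcpt.sInf_mem ((hKne.prod (nonempty_Icc.2 ht)).image _)
  rw [betaInf, ← hp]
  exact hδ _

theorem card_le_sepMax (hcont : Continuous fun p : ℝ × X => φ p.1 p.2) {K : Set X}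
    (hK : IsCompact K) {t : ℝ} {δ : X → ℝ} (hδ : ∀ x, 0 < δ x) (hb : 0 < betaInf φ t δ K)
    {E : Finset X} (hEK : ↑E ⊆ K) (hE : IsDynSeparated φ t δ E) : E.card ≤ sepMax φ t δ K := by
  obtain ⟨ε, hε, hsep⟩ := hK.exists_isSeparated_of_isDynSeparated hcont hb
    fun x hx s hs => betaInf_le δ hδ hx hs
  obtain ⟨n, hn⟩ := hK.exists_card_le_of_isSeparated hε
  exact le_csSup ⟨n, by rintro _ ⟨F, hFK, rfl, hF⟩; exact hn F hFK (hsep _ hFK hF)⟩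
    ⟨E, hEK, rfl, hE⟩

theorem one_le_sepMax (hcont : Continuous fun p : ℝ × X => φ p.1 p.2) {K : Set X}
    (hK : IsCompact K) (hKne : K.Nonempty) {t : ℝ} {δ : X → ℝ} (hδ : ∀ x, 0 < δ x)
    (hb : 0 < betaInf φ t δ K) : 1 ≤ sepMax φ t δ K := by
  obtain ⟨x, hx⟩ := hKne
  simpa using card_le_sepMax hcont hK hδ hb (E := {x}) (by simpa using hx)
    fun a ha b hb hab =>
      absurd ((Finset.mem_singleton.mp ha).trans (Finset.mem_singleton.mp hb).symm) hab

theorem periodicOrbitCount_le (hadd : ∀ s t x, φ (s + t) x = φ s (φ t x))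
    (hcont : Continuous fun p : ℝ × X => φ p.1 p.2) {K : Set X} (hK : IsCompact K)
    (hiso : ∀ x : X, (¬ ∀ t : ℝ, φ t x = x) → ∃ s : ℝ, φ s x ∈ K) {δ₁ δ : X → ℝ}
    (hδ₁ : ∀ (x y : X) (c : ℝ),
      (∀ r, dist (φ r x) (φ (c * r) y) < δ₁ (φ r x)) → y ∈ range fun s => φ s x)
    (hδ : IsAdaptedScale φ δ₁ δ) (hδpos : ∀ x, 0 < δ x) {t : ℝ} (hb : 0 < betaInf φ t δ K) :
    periodicOrbitCount φ t ≤ (⌊t / betaInf φ t δ K⌋₊ + 1) * sepMax φ t δ K := by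
  classical
  set b := betaInf φ t δ K
  choose p hpK T hT hpT hpO using fun O : periodicOrbits φ t =>
    exists_mem_of_mem_periodicOrbits hadd hiso O.2
  have hp : Function.Injective p := fun O₁ O₂ h => Subtype.ext ((hpO O₁).trans (h ▸ hpO O₂).symm)
  -- orbits are sorted by the `b`-window containing their period; within a window the chosen
  -- points are `(t, δ)`-separated
  rw [periodicOrbitCount_eq, mul_comm, ← Finset.card_range (⌊t / b⌋₊ + 1)]
  refine Nat.card_le_mul_card_of_mapsTo (f := fun O => ⌊T O / b⌋₊)
    (fun O => Finset.mem_range_succ_iff.mpr (Nat.floor_le_floor (div_le_div_of_nonneg_right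
      (hT O).2 hb.le))) _ fun E k hE => ?_
  rw [← Finset.card_image_of_injective E hp]
  refine card_le_sepMax hcont hK hδpos hb (fun x hx => ?_) ?_
  · obtain ⟨O, -, rfl⟩ := Finset.mem_image.mp hx
    exact hpK O
  simp only [Finset.coe_image]
  rintro _ ⟨O₁, h₁, rfl⟩ _ ⟨O₂, h₂, rfl⟩ hne
  have hnot : p O₂ ∉ range fun s => φ s (p O₁) := by
    rintro ⟨a, ha⟩
    refine hne (congrArg p (Subtype.ext ?_))
    rw [hpO, hpO, ← ha, range_flow_apply hadd]
  have hTT : |T O₁ - T O₂| < b :=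
    abs_sub_lt_of_floor_div_eq hb (hT O₁).1.le (hT O₂).1.le ((hE O₁ h₁).trans (hE O₂ h₂).symm)
  obtain ⟨s, hs, hsep⟩ := exists_le_dist_of_periodic hadd hδ₁ hδ (hT O₁).1 (hpT O₁) (hpT O₂)
    (fun s hs => hTT.le.trans (betaInf_le δ hδpos (hpK O₁) ⟨hs.1, hs.2.le.trans (hT O₁).2⟩))
    hnot
  exact ⟨s, ⟨hs.1, hs.2.le.trans (hT O₁).2⟩, hsep⟩

variable (φ) in
theorem limsup_le_eStar {K : Set X} (hK : IsCompact K) {δ : X → ℝ} (hδc : Continuous δ)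
    (hδ : ∀ x, 0 < δ x) :
    limsup (fun t : ℝ =>
        (((1 / t) * Real.log ((sepMax φ t δ K : ℝ) / betaInf φ t δ K)) : EReal)) atTop ≤
      eStar φ :=
  le_iSup₂_of_le K hK (le_iSup₂_of_le δ hδc (le_iSup_of_le hδ le_rfl))

variable (φ) in
theorem eStar_nonneg : 0 ≤ eStar φ := by
  refine le_of_eq_of_le ?_ (limsup_le_eStar φ isCompact_empty continuous_const fun _ => one_pos)
  simp [betaInf]

end Flow

theorem stmt19 {X : Type*} [MetricSpace X] (φ : ℝ → X → X)
    (hflow : IsFlow φ) (hexp : TopExpansive φ)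
    (hiso : ∃ K : Set X, IsCompact K ∧
      ∀ x : X, (¬ ∀ t : ℝ, φ t x = x) → ∃ s : ℝ, φ s x ∈ K) :
    Filter.limsup
      (fun t : ℝ => (((1 / t) * Real.log (periodicOrbitCount φ t : ℝ)) : EReal))
      Filter.atTop ≤ eStar φ := by
  obtain ⟨h0, hadd, hcont⟩ := hflow
  obtain ⟨K, hK, hiso⟩ := hiso
  rcases K.eq_empty_or_nonempty with rfl | hKne
  · have hN (t : ℝ) : periodicOrbitCount φ t = 0 := by
      rw [periodicOrbitCount_eq, Nat.card_eq_zero]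
      exact .inl ⟨fun O => (exists_mem_of_mem_periodicOrbits hadd hiso O.2).choose_spec.1⟩
    simpa [hN] using eStar_nonneg φ
  obtain ⟨δ₁, hδ₁c, hδ₁pos, hδ₁⟩ := hexp.exists_linear_reparam
  obtain ⟨δ, hδc, hδ01, hδ⟩ := exists_isAdaptedScale h0 hcont hδ₁c hδ₁pos
  have hδpos x : 0 < δ x := (hδ01 x).1
  refine (EReal.limsup_le_limsup_of_le_add (EReal.tendsto_coe.mpr tendsto_log_two_mul_div_atTop)
    ?_).trans (limsup_le_eStar φ hK hδc hδpos)
  filter_upwards [eventually_ge_atTop 1] with t ht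
  have hb := betaInf_pos hcont hK hKne (by linarith) hδc hδpos
  have hM := one_le_sepMax hcont hK hKne hδpos hb
  obtain ⟨x, hx⟩ := hKne
  have hb1 := (betaInf_le (t := t) δ hδpos hx ⟨le_rfl, by linarith⟩).trans (hδ01 (φ 0 x)).2
  have hlog := log_le_log_two_mul_add_log_div (M := sepMax φ t δ K)
    (N := periodicOrbitCount φ t) ht hb hb1 (by exact_mod_cast hM) (Nat.cast_nonneg _)
    (by exact_mod_cast periodicOrbitCount_le hadd hcont hK hiso hδ₁ hδ hδpos hb)
  rw [← EReal.coe_one, ← EReal.coe_div, ← EReal.coe_mul, ← EReal.coe_mul, ← EReal.coe_add,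
    EReal.coe_le_coe_iff, ← mul_add]
  exact mul_le_mul_of_nonneg_left hlog (by positivity)
end
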